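/- arXiv:2208.00186 — 2 statements merged into one kernel-verified Lean document; each statement's English description precedes it below -/
import Mathlib

section
/- With S as above and A₀ = [[u, 0, -Rθ/(P-q)], [2aθq/Q, u, 0], [-2(P-q)q/Q, 0, u]], the product A = S·A₀ equals [[θ(P-q)u/R, 0, -θ²], [0, (P-q)u/a, θu], [-θ², θu, (θ²/(2q))·((P+q)/(P-q))·u]], and in particular A is a symmetric matrix. -/
/-- Symmetrization of the tangential-convection matrix: with the symmetrizer `S` and
`A₀` the coefficient of `∂ₓ` in the quasilinear non-isentropic MHD boundary layer system,
the product `A = S·A₀` equals the displayed matrix, which is symmetric.  Here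
`a = R/(1+R)` and `Q = P + (1-2a)q`. -/
theorem stmt10 (u θ P q Q R a : ℝ)
    (hθ : 0 < θ) (hq : 0 < q) (hPq : q < P) (hR : 0 < R)
    (ha : a = R / (1 + R)) (hQdef : Q = P + (1 - 2 * a) * q) (hQ : 0 < Q) :
    let S : Matrix (Fin 3) (Fin 3) ℝ :=
      !![θ * (P - q) / R, 0, 0;
         0, (P - q) / a, θ;
         0, θ, (θ ^ 2 / (2 * q)) * ((P + q) / (P - q))]
    let A₀ : Matrix (Fin 3) (Fin 3) ℝ :=
      !![u, 0, -(R * θ) / (P - q);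
         2 * a * θ * q / Q, u, 0;
         -(2 * (P - q) * q) / Q, 0, u]
    let A : Matrix (Fin 3) (Fin 3) ℝ :=
      !![θ * (P - q) * u / R, 0, -θ ^ 2;
         0, (P - q) * u / a, θ * u;
         -θ ^ 2, θ * u, (θ ^ 2 / (2 * q)) * ((P + q) / (P - q)) * u]
    S * A₀ = A ∧ A.IsSymm := by
  intro S A₀ A
  subst hQdef
  have hR0 : R ≠ 0 := hR.ne'
  have ha0 : a ≠ 0 := by
    rw [ha]; positivity
  have hQ0 := hQ.ne'
  have hPq0 : P - q ≠ 0 := by nlinarith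
  have hq0 : q ≠ 0 := hq.ne'
  have hQinv : (P + (1 - 2 * a) * q) * (P + (1 - 2 * a) * q)⁻¹ = 1 := mul_inv_cancel₀ hQ0
  constructor
  · show S * A₀ = A
    ext i j
    fin_cases i <;> fin_cases j <;>
      simp [S, A₀, A, Matrix.mul_apply, Fin.sum_univ_three] <;>
      field_simp <;> ring_nf <;> linear_combination (-1 : ℝ) * hQinv
  · show A.IsSymm
    ext i j
    fin_cases i <;> fin_cases j <;> simp [A, Matrix.IsSymm]
end

section
/- With S as above and B₀ = 2q·[[-Rθ/(P-q), 0, 0], [0, -(aθ/Q)(P+q)/(P-q), aθ/Q], [0, 2aq/Q, -(P-q)/Q]] (up to the sign convention that -B₀∂_y²v appears in the equation), the product B = S·B₀ (with matching sign convention) equals the diagonal matrix diag(2θ²q, 2θq, θ²), which is positive definite when θ > 0 and q > 0. -/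
/-- Symmetrization of the diffusion matrix: with the symmetrizer `S` and `B₀` the
diffusion coefficient matrix (appearing as `-B₀∂_y²v` in the equation), the product
`S·(-B₀)` is the diagonal matrix `diag(2θ²q, 2θq, θ²)`, which is positive definite when
`θ > 0` and `q > 0`.  Here `a = R/(1+R)` and `Q = P + (1-2a)q`. -/
theorem stmt11 (θ P q Q R a : ℝ)
    (hθ : 0 < θ) (hq : 0 < q) (hPq : q < P) (hR : 0 < R)
    (ha : a = R / (1 + R)) (hQdef : Q = P + (1 - 2 * a) * q) (hQ : 0 < Q) :
    let S : Matrix (Fin 3) (Fin 3) ℝ :=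
      !![θ * (P - q) / R, 0, 0;
         0, (P - q) / a, θ;
         0, θ, (θ ^ 2 / (2 * q)) * ((P + q) / (P - q))]
    let B₀ : Matrix (Fin 3) (Fin 3) ℝ :=
      (2 * q) • !![-(R * θ) / (P - q), 0, 0;
                   0, -((a * θ / Q) * ((P + q) / (P - q))), a * θ / Q;
                   0, 2 * a * q / Q, -((P - q) / Q)]
    let B : Matrix (Fin 3) (Fin 3) ℝ :=
      !![2 * θ ^ 2 * q, 0, 0;
         0, 2 * θ * q, 0;
         0, 0, θ ^ 2]
    S * (-B₀) = B ∧ B.PosDef := by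
  intro S B₀ B
  have hPq' : (0:ℝ) < P - q := by linarith
  have ha0 : 0 < a := by
    rw [ha]; positivity
  have hR0 : R ≠ 0 := ne_of_gt hR
  have hP0 : P - q ≠ 0 := ne_of_gt hPq'
  have hQ0 : P + (1 - 2 * a) * q ≠ 0 := by rw [← hQdef]; exact ne_of_gt hQ
  have ha0' : a ≠ 0 := ne_of_gt ha0
  constructor
  · ext i j
    fin_cases i <;> fin_cases j <;>
      simp [S, B₀, B, Matrix.mul_apply, Fin.sum_univ_three, Matrix.vecHead,
        Matrix.vecTail, hQdef] <;>
      field_simp [show P + q * (1 - a * 2) ≠ 0 by intro h; apply hQ0; linarith,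
        show P + q * (1 - 2 * a) ≠ 0 by intro h; apply hQ0; linarith] <;> ring
  · have hB : B = Matrix.diagonal ![2 * θ ^ 2 * q, 2 * θ * q, θ ^ 2] := by
      ext i j
      fin_cases i <;> fin_cases j <;> simp [B, Matrix.diagonal, Matrix.vecHead, Matrix.vecTail]
    rw [hB]
    apply Matrix.posDef_diagonal_iff.2
    intro i
    fin_cases i <;> simp <;> positivity
end
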